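/- arXiv:1701.05643 — 5 statements merged into one kernel-verified Lean document; each statement's English description precedes it below -/
import Mathlib

section
/- Let n ≥ 3 be odd and T(x) = (x^n - 1)/(x - 1) in F_2[x]. Then the number of distinct monic irreducible factors of T over F_2 is at most (n + 9)/5. -/
open Polynomial

set_option linter.unnecessarySeqFocus false

private lemma zmod2 : ∀ a : ZMod 2, a = 0 ∨ a = 1 := by decide

private lemma eq_deg2 (p : (ZMod 2)[X]) (hm : p.Monic) (hd : p.natDegree = 2)
    (h0 : p.eval 0 ≠ 0) (h1 : p.eval 1 ≠ 0) : p = X^2 + X + 1 := by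
  have h := hm.as_sum
  rw [hd] at h
  simp [Finset.sum_range_succ] at h
  rcases zmod2 (p.coeff 0) with e0 | e0 <;> rcases zmod2 (p.coeff 1) with e1 | e1 <;>
    rw [e0, e1] at h <;> rw [h] at h0 h1 ⊢ <;>
    simp_all [show ((1:ZMod 2)+1) = 0 by decide] <;> ring1

private lemma eq_deg3 (p : (ZMod 2)[X]) (hm : p.Monic) (hd : p.natDegree = 3)
    (h0 : p.eval 0 ≠ 0) (h1 : p.eval 1 ≠ 0) : p = X^3 + X + 1 ∨ p = X^3 + X^2 + 1 := by
  have h := hm.as_sum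
  rw [hd] at h
  simp [Finset.sum_range_succ] at h
  rcases zmod2 (p.coeff 0) with e0 | e0 <;> rcases zmod2 (p.coeff 1) with e1 | e1 <;>
    rcases zmod2 (p.coeff 2) with e2 | e2 <;>
    rw [e0, e1, e2] at h <;> rw [h] at h0 h1 ⊢ <;>
    simp_all [show ((1:ZMod 2)+1) = 0 by decide] <;>
    first | (left; ring1) | (right; ring1)

private lemma eq_deg4 (p : (ZMod 2)[X]) (hm : p.Monic) (hd : p.natDegree = 4)
    (h0 : p.eval 0 ≠ 0) (h1 : p.eval 1 ≠ 0) (hsq : p ≠ X^4 + X^2 + 1) :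
    p = X^4 + X + 1 ∨ p = X^4 + X^3 + 1 ∨ p = X^4 + X^3 + X^2 + X + 1 := by
  have h := hm.as_sum
  rw [hd] at h
  simp [Finset.sum_range_succ] at h
  rcases zmod2 (p.coeff 0) with e0 | e0 <;> rcases zmod2 (p.coeff 1) with e1 | e1 <;>
    rcases zmod2 (p.coeff 2) with e2 | e2 <;> rcases zmod2 (p.coeff 3) with e3 | e3 <;>
    rw [e0, e1, e2, e3] at h <;> rw [h] at h0 h1 hsq ⊢ <;>
    simp_all [show ((1:ZMod 2)+1) = 0 by decide] <;>
    first
      | (exact absurd (by ring1) hsq)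
      | (left; ring1)
      | (right; left; ring1)
      | (right; right; ring1)

private lemma two_eq_zero : (2 : (ZMod 2)[X]) = 0 := by
  exact_mod_cast CharP.cast_eq_zero ((ZMod 2)[X]) 2

private lemma not_irred_sq : ¬ Irreducible ((X:(ZMod 2)[X])^4 + X^2 + 1) := by
  intro h
  have heq : ((X:(ZMod 2)[X])^4 + X^2 + 1) = (X^2+X+1) * (X^2+X+1) := by
    linear_combination (-(X:(ZMod 2)[X])^3 - X^2 - X) * two_eq_zero
  have hdeg : ((X:(ZMod 2)[X])^2+X+1).natDegree = 2 := by compute_degree!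
  have hnu : ¬ IsUnit ((X:(ZMod 2)[X])^2+X+1) := by
    intro hu
    have := natDegree_eq_zero_of_isUnit hu
    omega
  rcases h.isUnit_or_isUnit heq with h' | h' <;> exact hnu h'

private lemma no_root {p : (ZMod 2)[X]} (hirr : Irreducible p) (hd : 2 ≤ p.natDegree)
    (a : ZMod 2) : p.eval a ≠ 0 := by
  intro ha
  obtain ⟨q, hq⟩ := dvd_iff_isRoot.mpr ha
  have hq0 : q ≠ 0 := by
    intro h0
    exact hirr.ne_zero (by simp [hq, h0])
  rcases hirr.isUnit_or_isUnit hq with h' | h'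
  · exact Polynomial.not_isUnit_X_sub_C a h'
  · have h1 : q.natDegree = 0 := natDegree_eq_zero_of_isUnit h'
    have h2 : p.natDegree = (X - C a).natDegree + q.natDegree := by
      rw [hq, natDegree_mul (X_sub_C_ne_zero a) hq0]
    rw [natDegree_X_sub_C] at h2
    omega

/-- For odd `n ≥ 3` and `T = (x^n-1)/(x-1)` over `F_2`, the number of distinct monic
irreducible factors of `T` is at most `(n+9)/5`. -/
theorem stmt_5 (n : ℕ) (hn : 3 ≤ n) (hodd : Odd n)
    (T : Polynomial (ZMod 2)) (hT : T = ∑ i ∈ Finset.range n, X ^ i) :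
    ((UniqueFactorizationMonoid.normalizedFactors T).toFinset.card : ℝ) ≤ ((n : ℝ) + 9) / 5 := by
  classical
  set S := (UniqueFactorizationMonoid.normalizedFactors T).toFinset with hS
  -- basic facts about T
  have key : T * (X - 1) = X ^ n - 1 := by rw [hT]; exact geom_sum_mul X n
  have hXn : ((X:(ZMod 2)[X]) ^ n - 1).natDegree = n := by
    rw [show ((1:(ZMod 2)[X])) = C 1 by simp]
    exact natDegree_X_pow_sub_C
  have hXn0 : ((X:(ZMod 2)[X]) ^ n - 1) ≠ 0 := by
    intro h; rw [h] at hXn; simp at hXn; omega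
  have hT0 : T ≠ 0 := by
    intro h; rw [h, zero_mul] at key; exact hXn0 key.symm
  have hX1 : ((X:(ZMod 2)[X]) - 1) ≠ 0 := by
    rw [show ((1:(ZMod 2)[X])) = C 1 by simp]
    exact X_sub_C_ne_zero 1
  have hTdeg : T.natDegree = n - 1 := by
    have := natDegree_mul hT0 hX1
    rw [key, hXn] at this
    rw [show ((1:(ZMod 2)[X])) = C 1 by simp] at this
    rw [natDegree_X_sub_C] at this
    omega
  have hev0 : T.eval 0 = 1 := by
    rw [hT]
    rw [eval_finset_sum]
    simp only [eval_pow, eval_X]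
    rw [Finset.sum_eq_single 0]
    · simp
    · intro b _ hb; exact zero_pow hb
    · intro h; exact absurd (Finset.mem_range.mpr (by omega)) h
  have hev1 : T.eval 1 = 1 := by
    rw [hT]
    rw [eval_finset_sum]
    simp only [eval_pow, eval_X, one_pow, Finset.sum_const, Finset.card_range, nsmul_eq_mul,
      mul_one]
    rw [← ZMod.natCast_mod n 2, Nat.odd_iff.mp hodd]
    simp
  -- facts about the factors
  have hfacts : ∀ p ∈ S, p.Monic ∧ Irreducible p ∧ p ∣ T := by
    intro p hp
    rw [hS, Multiset.mem_toFinset] at hp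
    have hp0 : p ≠ 0 := fun h =>
      UniqueFactorizationMonoid.zero_notMem_normalizedFactors T (h ▸ hp)
    refine ⟨?_, UniqueFactorizationMonoid.irreducible_of_normalized_factor p hp,
      UniqueFactorizationMonoid.dvd_of_mem_normalizedFactors hp⟩
    have := UniqueFactorizationMonoid.normalize_normalized_factor p hp
    rw [← this]
    exact monic_normalize hp0
  have hnoroot : ∀ p ∈ S, ∀ a : ZMod 2, p.eval a ≠ 0 := by
    intro p hp a ha
    obtain ⟨hm, hirr, hdvd⟩ := hfacts p hp
    obtain ⟨q, hTq⟩ := hdvd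
    have : T.eval a = 0 := by rw [hTq, eval_mul, ha, zero_mul]
    rcases zmod2 a with rfl | rfl
    · rw [hev0] at this; exact one_ne_zero this
    · rw [hev1] at this; exact one_ne_zero this
  have hdeg2 : ∀ p ∈ S, 2 ≤ p.natDegree := by
    intro p hp
    obtain ⟨hm, hirr, hdvd⟩ := hfacts p hp
    have h1 : 1 ≤ p.natDegree := hirr.natDegree_pos
    rcases Nat.lt_or_ge p.natDegree 2 with h | h
    · exfalso
      have hd1 : p.natDegree = 1 := by omega
      have hp_eq : p = X + C (p.coeff 0) := by
        have := eq_X_add_C_of_natDegree_le_one (p := p) (by omega)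
        rwa [← hd1, hm.coeff_natDegree, map_one, one_mul] at this
      apply hnoroot p hp (p.coeff 0)
      conv_lhs => rw [hp_eq]
      rcases zmod2 (p.coeff 0) with h' | h' <;> rw [h'] <;>
        simp [show ((1:ZMod 2)+1) = 0 by decide]
    · exact h
  -- sum of degrees bound
  have hsum : ∑ p ∈ S, p.natDegree ≤ n - 1 := by
    have htot : ((UniqueFactorizationMonoid.normalizedFactors T).map natDegree).sum
        = T.natDegree := by
      have hmon : ∀ f ∈ UniqueFactorizationMonoid.normalizedFactors T, f.Monic := by
        intro f hf
        exact (hfacts f (by rw [hS, Multiset.mem_toFinset]; exact hf)).1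
      rw [← natDegree_multiset_prod_of_monic _ hmon]
      have hassoc := UniqueFactorizationMonoid.prod_normalizedFactors hT0
      exact natDegree_eq_of_degree_eq (degree_eq_degree_of_associated hassoc)
    have hdedup : (UniqueFactorizationMonoid.normalizedFactors T).dedup
        ≤ UniqueFactorizationMonoid.normalizedFactors T := Multiset.dedup_le _
    obtain ⟨u, hu⟩ := Multiset.le_iff_exists_add.mp hdedup
    have heq : ∑ p ∈ S, p.natDegree
        = ((UniqueFactorizationMonoid.normalizedFactors T).dedup.map natDegree).sum := rfl
    have hsplit : ((UniqueFactorizationMonoid.normalizedFactors T).map natDegree).sum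
        = ((UniqueFactorizationMonoid.normalizedFactors T).dedup.map natDegree).sum
          + (u.map natDegree).sum := by
      conv_lhs => rw [hu]
      rw [Multiset.map_add, Multiset.sum_add]
    rw [heq, ← hTdeg, ← htot, hsplit]
    omega
  -- counts by degree
  have c2 : (S.filter (fun p => p.natDegree = 2)).card ≤ 1 := by
    have hsub : S.filter (fun p => p.natDegree = 2) ⊆ {X^2 + X + 1} := by
      intro p hp
      rw [Finset.mem_filter] at hp
      obtain ⟨hpS, hpd⟩ := hp
      obtain ⟨hm, hirr, hdvd⟩ := hfacts p hpS
      rw [Finset.mem_singleton]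
      exact eq_deg2 p hm hpd (hnoroot p hpS 0) (hnoroot p hpS 1)
    exact (Finset.card_le_card hsub).trans (by simp)
  have c3 : (S.filter (fun p => p.natDegree = 3)).card ≤ 2 := by
    have hsub : S.filter (fun p => p.natDegree = 3) ⊆ {X^3 + X + 1, X^3 + X^2 + 1} := by
      intro p hp
      rw [Finset.mem_filter] at hp
      obtain ⟨hpS, hpd⟩ := hp
      obtain ⟨hm, hirr, hdvd⟩ := hfacts p hpS
      simp only [Finset.mem_insert, Finset.mem_singleton]
      exact eq_deg3 p hm hpd (hnoroot p hpS 0) (hnoroot p hpS 1)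
    exact (Finset.card_le_card hsub).trans ((Finset.card_insert_le _ _).trans (by simp))
  have c4 : (S.filter (fun p => p.natDegree = 4)).card ≤ 3 := by
    have hsub : S.filter (fun p => p.natDegree = 4)
        ⊆ {X^4 + X + 1, X^4 + X^3 + 1, X^4 + X^3 + X^2 + X + 1} := by
      intro p hp
      rw [Finset.mem_filter] at hp
      obtain ⟨hpS, hpd⟩ := hp
      obtain ⟨hm, hirr, hdvd⟩ := hfacts p hpS
      simp only [Finset.mem_insert, Finset.mem_singleton]
      refine eq_deg4 p hm hpd (hnoroot p hpS 0) (hnoroot p hpS 1) ?_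
      intro hpe
      rw [hpe] at hirr
      exact not_irred_sq hirr
    refine (Finset.card_le_card hsub).trans ?_
    refine (Finset.card_insert_le _ _).trans ?_
    have := Finset.card_insert_le ((X:(ZMod 2)[X])^4 + X^3 + 1)
      ({X^4 + X^3 + X^2 + X + 1} : Finset (ZMod 2)[X])
    simp only [Finset.card_singleton] at this ⊢
    omega
  -- the defect sum
  have hE : ∑ p ∈ S, (5 - p.natDegree) ≤ 10 := by
    have step : ∀ p ∈ S, 5 - p.natDegree ≤
        ((if p.natDegree = 2 then 3 else 0) + (if p.natDegree = 3 then 2 else 0))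
          + (if p.natDegree = 4 then 1 else 0) := by
      intro p hp
      have := hdeg2 p hp
      split_ifs <;> omega
    refine (Finset.sum_le_sum step).trans ?_
    rw [Finset.sum_add_distrib, Finset.sum_add_distrib,
      ← Finset.sum_filter, ← Finset.sum_filter, ← Finset.sum_filter,
      Finset.sum_const, Finset.sum_const, Finset.sum_const,
      smul_eq_mul, smul_eq_mul, smul_eq_mul]
    omega
  -- combine
  have hmain : 5 * S.card ≤ n + 9 := by
    have h1 : 5 * S.card = ∑ _p ∈ S, 5 := by rw [Finset.sum_const, smul_eq_mul, mul_comm]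
    have h2 : ∀ p ∈ S, 5 ≤ p.natDegree + (5 - p.natDegree) := by
      intro p hp; omega
    have h3 : (∑ _p ∈ S, 5) ≤ ∑ p ∈ S, (p.natDegree + (5 - p.natDegree)) :=
      Finset.sum_le_sum h2
    rw [Finset.sum_add_distrib] at h3
    omega
  rw [le_div_iff₀ (by norm_num : (0:ℝ) < 5)]
  have : ((S.card : ℝ)) * 5 ≤ ((n : ℝ) + 9) := by
    exact_mod_cast (by omega : S.card * 5 ≤ n + 9)
  exact this
end

section
/- Let n ≥ 3 be odd and T(x) = (x^n - 1)/(x - 1) in F_2[x]. Then the number W(T) of monic square-free divisors of T over F_2 satisfies W(T) ≤ 2^{(n+9)/5}. -/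
/-!
A monic squarefree divisor of `T` is the product of a set of distinct monic irreducible factors
of `T`, so `W(T) ≤ 2 ^ ω` with `ω` the number of such factors. As `n` is odd, `T(0) = T(1) = 1`,
so every irreducible factor has degree at least `2`. Over `𝔽₂` there are `1, 2, 3` monic
irreducibles of degree `2, 3, 4`, so the factors of degree `d < 5` have total deficit
`∑ (5 - d) ≤ 3 · 1 + 2 · 2 + 1 · 3 = 10`, whence `5 ω ≤ deg T + 10 = n + 9`.
-/

open Polynomial UniqueFactorizationMonoid Finset

theorem ZMod.eq_zero_or_eq_one (a : ZMod 2) : a = 0 ∨ a = 1 := by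
  revert a; decide

theorem UniqueFactorizationMonoid.ncard_squarefree_dvd_le {α : Type*}
    [CommMonoidWithZero α] [Nontrivial α] [StrongNormalizationMonoid α]
    [UniqueFactorizationMonoid α] [DecidableEq α] {f : α} (hf : f ≠ 0) :
    {d | normalize d = d ∧ Squarefree d ∧ d ∣ f}.ncard ≤
      2 ^ #(normalizedFactors f).toFinset := by
  have hsub : {d | normalize d = d ∧ Squarefree d ∧ d ∣ f} ⊆
      (normalizedFactors f).toFinset.powerset.image (fun s => ∏ p ∈ s, p) := by
    rintro d ⟨hnorm, hsq, hdvd⟩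
    have hd : d ≠ 0 := hsq.ne_zero
    have hnodup := (squarefree_iff_nodup_normalizedFactors hd).mp hsq
    refine Finset.mem_image.mpr ⟨(normalizedFactors d).toFinset, ?_, ?_⟩
    · exact Finset.mem_powerset.mpr <| Multiset.toFinset_subset.mpr <| Multiset.subset_of_le <|
        (dvd_iff_normalizedFactors_le_normalizedFactors hd hf).mp hdvd
    · rw [Finset.prod_eq_multiset_prod, Multiset.toFinset_val, hnodup.dedup, Multiset.map_id',
        prod_normalizedFactors_eq hd, hnorm]
  calc {d | normalize d = d ∧ Squarefree d ∧ d ∣ f}.ncard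
      ≤ #((normalizedFactors f).toFinset.powerset.image (fun s => ∏ p ∈ s, p)) := by
        simpa only [Set.ncard_coe_finset] using Set.ncard_le_ncard hsub (Finset.finite_toSet _)
    _ ≤ 2 ^ #(normalizedFactors f).toFinset := Finset.card_image_le.trans (card_powerset _).le

namespace Polynomial

variable {K : Type*} [Field K] [DecidableEq K]

theorem ncard_monic_squarefree_dvd_le {f : K[X]} (hf : f ≠ 0) :
    {d | d.Monic ∧ Squarefree d ∧ d ∣ f}.ncard ≤ 2 ^ #(normalizedFactors f).toFinset := by
  convert ncard_squarefree_dvd_le hf using 2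
  ext d
  constructor
  · rintro ⟨hd, hrest⟩
    exact ⟨hd.normalize_eq_self, hrest⟩
  · rintro ⟨hd, hsq, hdvd⟩
    exact ⟨(normalize_eq_self_iff_monic hsq.ne_zero).mp hd, hsq, hdvd⟩

theorem sum_natDegree_normalizedFactors_le {f : K[X]} (hf : f ≠ 0) :
    ∑ p ∈ (normalizedFactors f).toFinset, p.natDegree ≤ f.natDegree := by
  have hdvd : ∏ p ∈ (normalizedFactors f).toFinset, p ∣ f :=
    (Multiset.toFinset_prod_dvd_prod _).trans (prod_normalizedFactors hf).dvd
  rw [← natDegree_prod _ _ fun p hp ↦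
    ne_zero_of_mem_normalizedFactors (Multiset.mem_toFinset.mp hp)]
  exact natDegree_le_of_dvd hdvd hf

theorem one_lt_natDegree_of_mem_normalizedFactors {f p : K[X]} (hf : ∀ a, ¬f.IsRoot a)
    (hp : p ∈ normalizedFactors f) : 1 < p.natDegree := by
  have hirr := irreducible_of_normalized_factor p hp
  refine lt_of_le_of_ne hirr.natDegree_pos fun h ↦ ?_
  obtain ⟨a, ha⟩ :=
    exists_root_of_degree_eq_one ((degree_eq_iff_natDegree_eq_of_pos one_pos).mpr h.symm)
  exact hf a (ha.dvd (dvd_of_mem_normalizedFactors hp))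

namespace ZModTwo

variable {p : (ZMod 2)[X]}

theorem eq_of_irreducible_of_natDegree_eq_two (hp : p.Monic) (hirr : Irreducible p)
    (hd : p.natDegree = 2) : p = X ^ 2 + X + 1 := by
  have hrep : p = X ^ 2 + C (p.coeff 1) * X + C (p.coeff 0) := by
    conv_lhs => rw [hp.as_sum, hd]
    simp only [Finset.sum_range_succ, Finset.sum_range_zero]; ring
  have h0 := hirr.not_isRoot_of_natDegree_ne_one (by omega) (x := 0)
  have h1 := hirr.not_isRoot_of_natDegree_ne_one (by omega) (x := 1)
  rw [hrep] at h0 h1 ⊢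
  rcases (p.coeff 0).eq_zero_or_eq_one with e | e <;>
  rcases (p.coeff 1).eq_zero_or_eq_one with c | c <;>
  simp +decide [e, c] at h0 h1 ⊢

theorem eq_of_irreducible_of_natDegree_eq_three (hp : p.Monic) (hirr : Irreducible p)
    (hd : p.natDegree = 3) : p = X ^ 3 + X + 1 ∨ p = X ^ 3 + X ^ 2 + 1 := by
  have hrep : p = X ^ 3 + C (p.coeff 2) * X ^ 2 + C (p.coeff 1) * X + C (p.coeff 0) := by
    conv_lhs => rw [hp.as_sum, hd]
    simp only [Finset.sum_range_succ, Finset.sum_range_zero]; ring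
  have h0 := hirr.not_isRoot_of_natDegree_ne_one (by omega) (x := 0)
  have h1 := hirr.not_isRoot_of_natDegree_ne_one (by omega) (x := 1)
  rw [hrep] at h0 h1 ⊢
  rcases (p.coeff 0).eq_zero_or_eq_one with e | e <;>
  rcases (p.coeff 1).eq_zero_or_eq_one with c | c <;>
  rcases (p.coeff 2).eq_zero_or_eq_one with b | b <;>
  simp +decide [e, c, b] at h0 h1 ⊢

theorem X_pow_four_add_X_sq_add_one_eq_sq :
    (X ^ 4 + X ^ 2 + 1 : (ZMod 2)[X]) = (X ^ 2 + X + 1) ^ 2 := by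
  rw [CharTwo.add_sq, CharTwo.add_sq]; ring

theorem eq_of_irreducible_of_natDegree_eq_four (hp : p.Monic) (hirr : Irreducible p)
    (hd : p.natDegree = 4) :
    p = X ^ 4 + X + 1 ∨ p = X ^ 4 + X ^ 3 + 1 ∨ p = X ^ 4 + X ^ 3 + X ^ 2 + X + 1 := by
  have hrep : p = X ^ 4 + C (p.coeff 3) * X ^ 3 + C (p.coeff 2) * X ^ 2 + C (p.coeff 1) * X
      + C (p.coeff 0) := by
    conv_lhs => rw [hp.as_sum, hd]
    simp only [Finset.sum_range_succ, Finset.sum_range_zero]; ring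
  have h0 := hirr.not_isRoot_of_natDegree_ne_one (by omega) (x := 0)
  have h1 := hirr.not_isRoot_of_natDegree_ne_one (by omega) (x := 1)
  have hsq : p ≠ X ^ 4 + X ^ 2 + 1 := fun h ↦
    not_irreducible_pow (by norm_num) (X_pow_four_add_X_sq_add_one_eq_sq ▸ h ▸ hirr)
  rw [hrep] at h0 h1 hsq ⊢
  rcases (p.coeff 0).eq_zero_or_eq_one with e | e <;>
  rcases (p.coeff 1).eq_zero_or_eq_one with c | c <;>
  rcases (p.coeff 2).eq_zero_or_eq_one with b | b <;>
  rcases (p.coeff 3).eq_zero_or_eq_one with a | a <;>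
  simp +decide [e, c, b, a] at h0 h1 hsq ⊢

theorem card_filter_natDegree_eq_le {F : Finset (ZMod 2)[X]} (hmonic : ∀ p ∈ F, p.Monic)
    (hirr : ∀ p ∈ F, Irreducible p) {d : ℕ} (hd : d ∈ Icc 2 4) :
    #{p ∈ F | p.natDegree = d} ≤ d - 1 := by
  have hmem {p} (hp : p ∈ {p ∈ F | p.natDegree = d}) :
      p.Monic ∧ Irreducible p ∧ p.natDegree = d := by
    obtain ⟨hpF, hpd⟩ := Finset.mem_filter.mp hp
    exact ⟨hmonic p hpF, hirr p hpF, hpd⟩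
  simp only [Finset.mem_Icc] at hd
  obtain rfl | rfl | rfl : d = 2 ∨ d = 3 ∨ d = 4 := by omega
  · refine Finset.card_le_one.mpr fun p hp q hq ↦ ?_
    obtain ⟨hpm, hpi, hpd⟩ := hmem hp
    obtain ⟨hqm, hqi, hqd⟩ := hmem hq
    rw [eq_of_irreducible_of_natDegree_eq_two hpm hpi hpd,
      eq_of_irreducible_of_natDegree_eq_two hqm hqi hqd]
  · refine (Finset.card_le_card fun p hp ↦ ?_).trans
      (Finset.card_le_two (a := X ^ 3 + X + 1) (b := X ^ 3 + X ^ 2 + 1))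
    obtain ⟨hpm, hpi, hpd⟩ := hmem hp
    simpa using eq_of_irreducible_of_natDegree_eq_three hpm hpi hpd
  · refine (Finset.card_le_card fun p hp ↦ ?_).trans (Finset.card_le_three
      (a := X ^ 4 + X + 1) (b := X ^ 4 + X ^ 3 + 1) (c := X ^ 4 + X ^ 3 + X ^ 2 + X + 1))
    obtain ⟨hpm, hpi, hpd⟩ := hmem hp
    simpa using eq_of_irreducible_of_natDegree_eq_four hpm hpi hpd

theorem five_mul_card_le_sum_natDegree_add_ten {F : Finset (ZMod 2)[X]}
    (hmonic : ∀ p ∈ F, p.Monic) (hirr : ∀ p ∈ F, Irreducible p)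
    (hdeg : ∀ p ∈ F, 1 < p.natDegree) : 5 * #F ≤ ∑ p ∈ F, p.natDegree + 10 := by
  have hdeficit (p) (hp : p ∈ F) :
      5 - p.natDegree = ∑ d ∈ Icc 2 4, if p.natDegree = d then 5 - d else 0 := by
    rw [Finset.sum_ite_eq]
    have := hdeg p hp
    split_ifs with h <;> simp only [Finset.mem_Icc] at h <;> omega
  have hsum : ∑ p ∈ F, (5 - p.natDegree) ≤ 10 := calc
    ∑ p ∈ F, (5 - p.natDegree)
      = ∑ d ∈ Icc 2 4, #{p ∈ F | p.natDegree = d} * (5 - d) := by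
        rw [Finset.sum_congr rfl hdeficit, Finset.sum_comm]
        simp only [← Finset.sum_filter, Finset.sum_const, smul_eq_mul]
    _ ≤ ∑ d ∈ Icc 2 4, (d - 1) * (5 - d) := Finset.sum_le_sum fun d hd ↦
        Nat.mul_le_mul_right _ (card_filter_natDegree_eq_le hmonic hirr hd)
    _ = 10 := by decide
  calc 5 * #F = ∑ p ∈ F, 5 := by rw [Finset.sum_const, smul_eq_mul, mul_comm]
    _ ≤ ∑ p ∈ F, (p.natDegree + (5 - p.natDegree)) := Finset.sum_le_sum fun p _ ↦ by omega
    _ ≤ ∑ p ∈ F, p.natDegree + 10 := by rw [Finset.sum_add_distrib]; omega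

theorem five_mul_card_normalizedFactors_le {f : (ZMod 2)[X]} (hf : ∀ a, ¬f.IsRoot a) :
    5 * #(normalizedFactors f).toFinset ≤ f.natDegree + 10 := by
  have hf0 : f ≠ 0 := fun h ↦ hf 0 (by simp [h])
  have hfactor {p} (hp : p ∈ (normalizedFactors f).toFinset) :=
    (Polynomial.mem_normalizedFactors_iff hf0).mp (Multiset.mem_toFinset.mp hp)
  calc 5 * #(normalizedFactors f).toFinset
      ≤ ∑ p ∈ (normalizedFactors f).toFinset, p.natDegree + 10 :=
        five_mul_card_le_sum_natDegree_add_ten (fun p hp ↦ (hfactor hp).2.1)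
          (fun p hp ↦ (hfactor hp).1) fun p hp ↦
          one_lt_natDegree_of_mem_normalizedFactors hf (Multiset.mem_toFinset.mp hp)
    _ ≤ f.natDegree + 10 := by grw [sum_natDegree_normalizedFactors_le hf0]

theorem not_isRoot_geom_sum_X {n : ℕ} (hn : Odd n) (a : ZMod 2) :
    ¬(∑ i ∈ range n, X ^ i : (ZMod 2)[X]).IsRoot a := by
  rw [IsRoot, eval_geom_sum]
  rcases a.eq_zero_or_eq_one with rfl | rfl
  · simp [zero_geom_sum, hn.pos.ne']
  · simp [(ZMod.natCast_eq_one_iff_odd).mpr hn]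

end ZModTwo
end Polynomial

theorem stmt_6_general (n : ℕ) (hodd : Odd n)
    (T : Polynomial (ZMod 2)) (hT : T = ∑ i ∈ Finset.range n, X ^ i) :
    ({d : Polynomial (ZMod 2) | d.Monic ∧ Squarefree d ∧ d ∣ T}.ncard : ℝ)
      ≤ (2 : ℝ) ^ (((n : ℝ) + 9) / 5) := by
  have hroots : ∀ a, ¬T.IsRoot a := hT ▸ ZModTwo.not_isRoot_geom_sum_X hodd
  have hT0 : T ≠ 0 := fun h ↦ hroots 0 (by simp [h])
  have hdeg : T.natDegree ≤ n - 1 := hT ▸ natDegree_sum_le_of_forall_le _ _ fun i hi ↦ by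
    simpa using Nat.le_sub_one_of_lt (Finset.mem_range.mp hi)
  have hω : 5 * #(normalizedFactors T).toFinset ≤ n + 9 := by
    have := ZModTwo.five_mul_card_normalizedFactors_le hroots
    have := hodd.pos
    omega
  calc ({d : Polynomial (ZMod 2) | d.Monic ∧ Squarefree d ∧ d ∣ T}.ncard : ℝ)
      ≤ (2 : ℝ) ^ (#(normalizedFactors T).toFinset : ℝ) := by
        rw [Real.rpow_natCast]
        exact_mod_cast ncard_monic_squarefree_dvd_le hT0
    _ ≤ (2 : ℝ) ^ (((n : ℝ) + 9) / 5) := by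
        refine Real.rpow_le_rpow_of_exponent_le one_le_two ?_
        rw [le_div_iff₀ (by norm_num)]
        exact_mod_cast (by omega : #(normalizedFactors T).toFinset * 5 ≤ n + 9)

/-- For odd `n ≥ 3` and `T = (x^n-1)/(x-1)` over `F_2`, the number `W(T)` of monic
squarefree divisors of `T` satisfies `W(T) ≤ 2^{(n+9)/5}`. -/
theorem stmt_6 (n : ℕ) (hn : 3 ≤ n) (hodd : Odd n)
    (T : Polynomial (ZMod 2)) (hT : T = ∑ i ∈ Finset.range n, X ^ i) :
    ({d : Polynomial (ZMod 2) | d.Monic ∧ Squarefree d ∧ d ∣ T}.ncard : ℝ)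
      ≤ (2 : ℝ) ^ (((n : ℝ) + 9) / 5) :=
  stmt_6_general n hodd T hT
end

section
/- If n is an odd positive integer, then the number of square-free divisors of 2^n - 1 satisfies W(2^n - 1) < 2^{n/7 + 2}. -/
/-!
If `p ∣ 2 ^ n - 1` with `n` odd, the order of `2` modulo `p` divides `n` and so is odd. Only ten
primes below `128` have this property, and their product exceeds `2 ^ 56`; every other prime
factor of `2 ^ n - 1` is at least `2 ^ 7`. Comparing the product of the prime factors with `2 ^ n`
gives `7 ω(2 ^ n - 1) ≤ n + 13`, and `2 ^ n - 1` has `2 ^ ω(2 ^ n - 1)` squarefree divisors.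
-/

open Finset

theorem ncard_setOf_squarefree_dvd {m : ℕ} (hm : m ≠ 0) :
    {d : ℕ | Squarefree d ∧ d ∣ m}.ncard = 2 ^ #m.primeFactors := by
  have hset : {d : ℕ | Squarefree d ∧ d ∣ m} = ↑{d ∈ m.divisors | Squarefree d} := by
    ext d
    simp [hm, and_comm]
  rw [hset, Set.ncard_coe_finset, card_eq_sum_ones, Nat.sum_divisors_filter_squarefree hm,
    ← card_eq_sum_ones, card_powerset, Nat.factors_eq]
  simp

theorem exists_odd_mem_divisors_pow_mod_eq_one {a n p : ℕ} (ha : 0 < a) (hp : p.Prime)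
    (hn : Odd n) (h : p ∣ a ^ n - 1) :
    ∃ d ∈ (p - 1).divisors, Odd d ∧ a ^ d % p = 1 := by
  have := Fact.mk hp
  have hpow : (a : ZMod p) ^ n = 1 := by
    have := (Nat.modEq_iff_dvd' (Nat.one_le_pow n a ha)).mpr h
    exact_mod_cast ((ZMod.natCast_eq_natCast_iff _ _ _).mpr this).symm
  have ha0 : (a : ZMod p) ≠ 0 := fun h0 => by
    simp [h0, zero_pow hn.pos.ne'] at hpow
  refine ⟨orderOf (a : ZMod p), ?_, hn.of_dvd_nat (orderOf_dvd_of_pow_eq_one hpow), ?_⟩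
  · exact Nat.mem_divisors.mpr ⟨ZMod.orderOf_dvd_card_sub_one ha0, by have := hp.two_le; omega⟩
  · have := (ZMod.natCast_eq_natCast_iff' (a ^ orderOf (a : ZMod p)) 1 p).mp
      (by push_cast; exact pow_orderOf_eq_one _)
    rwa [Nat.mod_eq_of_lt hp.one_lt] at this

theorem pow_card_mul_prod_le_pow_card_mul_prod {B : ℕ} {P T : Finset ℕ}
    (hP : ∀ p ∈ P, p ∉ T → B ≤ p) (hT : ∀ p ∈ T, p ≤ B) :
    B ^ #P * ∏ p ∈ T, p ≤ B ^ #T * ∏ p ∈ P, p := by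
  have hPT : B ^ #(P \ T) ≤ ∏ p ∈ P \ T, p :=
    pow_card_le_prod _ _ _ fun p hp => hP p (mem_sdiff.1 hp).1 (mem_sdiff.1 hp).2
  have hTP : ∏ p ∈ T \ P, p ≤ B ^ #(T \ P) :=
    prod_le_pow_card _ _ _ fun p hp => hT p (mem_sdiff.1 hp).1
  rw [← card_inter_add_card_sdiff P T, ← card_inter_add_card_sdiff T P,
    ← prod_inter_mul_prod_sdiff P T, ← prod_inter_mul_prod_sdiff T P, inter_comm T P, pow_add,
    pow_add]
  calc B ^ #(P ∩ T) * B ^ #(P \ T) * ((∏ p ∈ P ∩ T, p) * ∏ p ∈ T \ P, p)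
      ≤ B ^ #(P ∩ T) * (∏ p ∈ P \ T, p) * ((∏ p ∈ P ∩ T, p) * B ^ #(T \ P)) := by
        gcongr
    _ = B ^ #(P ∩ T) * B ^ #(T \ P) * ((∏ p ∈ P ∩ T, p) * ∏ p ∈ P \ T, p) := by ring

def oddOrderTwoPrimesLt128 : Finset ℕ := {7, 23, 31, 47, 71, 73, 79, 89, 103, 127}

set_option maxRecDepth 100000 in
theorem mem_oddOrderTwoPrimesLt128 :
    ∀ p < 128, p.Prime → ∀ d ∈ (p - 1).divisors, Odd d → 2 ^ d % p = 1 →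
      p ∈ oddOrderTwoPrimesLt128 := by
  decide

theorem seven_mul_card_primeFactors_two_pow_sub_one_le {n : ℕ} (hn : Odd n) :
    7 * #(2 ^ n - 1).primeFactors ≤ n + 13 := by
  set m := 2 ^ n - 1
  set k := #m.primeFactors
  have hm : m < 2 ^ n := Nat.sub_lt (Nat.two_pow_pos n) one_pos
  have hm0 : m ≠ 0 := by have := Nat.one_lt_two_pow hn.pos.ne'; omega
  have hlarge : ∀ p ∈ m.primeFactors, p ∉ oddOrderTwoPrimesLt128 → 128 ≤ p := by
    intro p hp hpT
    obtain ⟨hprime, hdvd, -⟩ := Nat.mem_primeFactors.mp hp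
    obtain ⟨d, hd, hodd, hpow⟩ := exists_odd_mem_divisors_pow_mod_eq_one two_pos hprime hn hdvd
    by_contra! hlt
    exact hpT (mem_oddOrderTwoPrimesLt128 p hlt hprime d hd hodd hpow)
  have hsmall : ∀ p ∈ oddOrderTwoPrimesLt128, p ≤ 128 := by decide
  have hprod : ∏ p ∈ m.primeFactors, p ≤ m :=
    Nat.le_of_dvd (Nat.pos_of_ne_zero hm0) (Nat.prod_primeFactors_dvd m)
  have : 2 ^ (7 * k + 56) < 2 ^ (n + 70) :=
    calc 2 ^ (7 * k + 56) ≤ 128 ^ k * ∏ p ∈ oddOrderTwoPrimesLt128, p := by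
          rw [pow_add, pow_mul]; gcongr <;> decide
      _ ≤ 128 ^ 10 * ∏ p ∈ m.primeFactors, p :=
          pow_card_mul_prod_le_pow_card_mul_prod hlarge hsmall
      _ ≤ 128 ^ 10 * m := by gcongr
      _ < 128 ^ 10 * 2 ^ n := by gcongr
      _ = 2 ^ (n + 70) := by ring
  have := (Nat.pow_lt_pow_iff_right one_lt_two).mp this
  omega

theorem stmt_8_general (n : ℕ) (hodd : Odd n) :
    ({d : ℕ | Squarefree d ∧ d ∣ 2 ^ n - 1}.ncard : ℝ)
      < (2 : ℝ) ^ ((n : ℝ) / 7 + 2) := by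
  have hm : 2 ^ n - 1 ≠ 0 := by have := Nat.one_lt_two_pow hodd.pos.ne'; omega
  have hk : (#(2 ^ n - 1).primeFactors : ℝ) < n / 7 + 2 := by
    have := seven_mul_card_primeFactors_two_pow_sub_one_le hodd
    rify at this
    linarith
  rw [ncard_setOf_squarefree_dvd hm, Nat.cast_pow, Nat.cast_ofNat, ← Real.rpow_natCast]
  exact Real.rpow_lt_rpow_of_exponent_lt one_lt_two hk

/-- For odd positive `n`, the number of squarefree divisors of `2^n - 1`
satisfies `W(2^n - 1) < 2^{n/7 + 2}`. -/
theorem stmt_8 (n : ℕ) (hn : 0 < n) (hodd : Odd n) :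
    ({d : ℕ | Squarefree d ∧ d ∣ 2 ^ n - 1}.ncard : ℝ)
      < (2 : ℝ) ^ ((n : ℝ) / 7 + 2) :=
  stmt_8_general n hodd
end

section
/- Let n be an odd integer with n > 9 and n ≠ 15, and let T(x) = (x^n - 1)/(x - 1) in F_2[x]. Then W(T) · W(2^n - 1) < 2^{n/2 - 1}. -/
/-!
A square-free normalized divisor is the product of a subset of the distinct irreducible factors,
so `W(T) ≤ 2 ^ r` and `W(2 ^ n - 1) ≤ 2 ^ w`, where `r` and `w` count the distinct irreducible
factors of `T` and the distinct prime factors of `2 ^ n - 1`; it suffices that `2 (r + w) + 3 ≤ n`.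

Charge an irreducible factor `P` its degree and a prime `p` its `⌊log₂ p⌋`. On either side the
charges add up to at most `n - 1`, and almost all of them are at least `6`:
* `T` has no root in `𝔽₂` (as `n` is odd), so `deg P ≥ 2`; a root of `P` has order dividing both
  `n` and `2 ^ deg P - 1`, so there are at most `gcd(n, 2 ^ d - 1) / d` factors of degree `d`;
* `2` has odd order modulo `p` dividing `p - 1`, and the only primes below `64` with this
  property are `7, 23, 31, 47`.
Hence the total shortfall of the charges below `6` is at most `n - 7` once `n > 9`, `n ≠ 15`
(for `n < 38` by direct computation), which gives `6 (r + w) ≤ 3 n - 9`.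
-/

open Polynomial UniqueFactorizationMonoid Finset

section Normalized

variable {α : Type*} [CommMonoidWithZero α] [UniqueFactorizationMonoid α]

theorem Finset.prod_dvd_of_irreducible_normalized_dvd [NormalizationMonoid α] {s : Finset α}
    {a : α} (ha : a ≠ 0) (hs : ∀ p ∈ s, Irreducible p ∧ normalize p = p ∧ p ∣ a) :
    ∏ p ∈ s, p ∣ a := by
  have hle : s.val ≤ normalizedFactors a :=
    (Multiset.le_iff_subset s.nodup).2 fun p hp ↦ (mem_normalizedFactors_iff' ha).2 (hs p hp)
  simpa using (Multiset.prod_dvd_prod_of_le hle).trans (prod_normalizedFactors ha).dvd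

variable [StrongNormalizationMonoid α] [DecidableEq α] [Nontrivial α]

theorem prod_toFinset_normalizedFactors_eq_self {d : α} (hsq : Squarefree d)
    (hd : normalize d = d) : ∏ p ∈ (normalizedFactors d).toFinset, p = d := by
  have hnodup := (squarefree_iff_nodup_normalizedFactors hsq.ne_zero).mp hsq
  rw [prod_eq_multiset_prod, Multiset.toFinset_val, hnodup.dedup, Multiset.map_id',
    prod_normalizedFactors_eq hsq.ne_zero, hd]

theorem ncard_le_two_pow_card_toFinset_normalizedFactors {a : α} (ha : a ≠ 0) {s : Set α}
    (hs : ∀ d ∈ s, Squarefree d ∧ normalize d = d ∧ d ∣ a) :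
    s.ncard ≤ 2 ^ #(normalizedFactors a).toFinset := by
  rw [← card_powerset, ← Set.ncard_coe_finset]
  refine Set.ncard_le_ncard_of_injOn (fun d ↦ (normalizedFactors d).toFinset) ?_ ?_
    (finite_toSet _)
  · intro d hd
    obtain ⟨hsq, -, hda⟩ := hs d hd
    exact mem_coe.2 <| mem_powerset.2 <| Multiset.toFinset_subset.2 <| Multiset.subset_of_le <|
      (dvd_iff_normalizedFactors_le_normalizedFactors hsq.ne_zero ha).1 hda
  · intro d hd e he hde
    rw [← prod_toFinset_normalizedFactors_eq_self (hs d hd).1 (hs d hd).2.1,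
      ← prod_toFinset_normalizedFactors_eq_self (hs e he).1 (hs e he).2.1]
    exact congrArg (∏ p ∈ ·, p) hde

end Normalized

theorem Finset.mul_card_le_sum_add_sum_tsub {ι : Type*} (s : Finset ι) (f : ι → ℕ) (k : ℕ) :
    k * #s ≤ ∑ i ∈ s, f i + ∑ i ∈ s, (k - f i) := by
  rw [← sum_add_distrib, mul_comm, ← smul_eq_mul, ← sum_const]
  exact sum_le_sum fun i _ ↦ le_add_tsub

section FiniteField

variable {K : Type*} [Field K] [Fintype K]

theorem Irreducible.dvd_X_pow_gcd_sub_one {P : K[X]} (hP : Irreducible P) {n : ℕ} (hn : n ≠ 0)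
    (h : P ∣ X ^ n - 1) : P ∣ X ^ n.gcd (Fintype.card K ^ P.natDegree - 1) - 1 := by
  have := Fact.mk hP
  let pb := AdjoinRoot.powerBasis hP.ne_zero
  let _ : Fintype (AdjoinRoot P) := Module.fintypeOfFintype pb.basis
  have hcard : Fintype.card (AdjoinRoot P) = Fintype.card K ^ P.natDegree := by
    rw [Module.card_eq_pow_finrank (K := K), pb.finrank, AdjoinRoot.powerBasis_dim]
  have hpow (m : ℕ) : P ∣ X ^ m - 1 ↔ AdjoinRoot.root P ^ m = 1 := by
    rw [← AdjoinRoot.mk_eq_zero, map_sub, map_pow, AdjoinRoot.mk_X, map_one, sub_eq_zero]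
  have hn' := (hpow n).1 h
  have hroot : AdjoinRoot.root P ≠ 0 := by
    rintro h0
    simp [h0, zero_pow hn] at hn'
  have hq := FiniteField.pow_card_sub_one_eq_one _ hroot
  rw [hcard] at hq
  exact (hpow _).2 (pow_gcd_eq_one.2 ⟨hn', hq⟩)

theorem natDegree_mul_card_filter_le {s : Finset K[X]} {n : ℕ} (hn : n ≠ 0)
    (hs : ∀ P ∈ s, Irreducible P ∧ P.Monic ∧ P ∣ X ^ n - 1) (d : ℕ) :
    d * #{P ∈ s | P.natDegree = d} ≤ n.gcd (Fintype.card K ^ d - 1) := by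
  classical
  set g := n.gcd (Fintype.card K ^ d - 1)
  have hg : 0 < g := Nat.gcd_pos_of_pos_left _ (Nat.pos_of_ne_zero hn)
  have hXg : (X ^ g - 1 : K[X]) ≠ 0 := X_pow_sub_C_ne_zero hg 1
  have hdvd : ∏ P ∈ s with P.natDegree = d, P ∣ X ^ g - 1 := by
    refine prod_dvd_of_irreducible_normalized_dvd hXg fun P hP ↦ ?_
    obtain ⟨hPs, rfl⟩ := mem_filter.1 hP
    obtain ⟨hirr, hmon, hPn⟩ := hs P hPs
    exact ⟨hirr, hmon.normalize_eq_self, hirr.dvd_X_pow_gcd_sub_one hn hPn⟩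
  have hdeg : (∏ P ∈ s with P.natDegree = d, P).natDegree = d * #{P ∈ s | P.natDegree = d} := by
    rw [natDegree_prod _ _ fun P hP ↦ (hs P (mem_filter.1 hP).1).1.ne_zero,
      sum_congr rfl fun P hP ↦ (mem_filter.1 hP).2, sum_const, smul_eq_mul, mul_comm]
  have hXdeg : (X ^ g - 1 : K[X]).natDegree = g := by
    simpa using natDegree_X_pow_sub_C (n := g) (r := (1 : K))
  simpa [hdeg, hXdeg] using natDegree_le_of_dvd hdvd hXg

theorem sum_tsub_natDegree_le {s : Finset K[X]} {n : ℕ} (hn : n ≠ 0)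
    (hs : ∀ P ∈ s, Irreducible P ∧ P.Monic ∧ P ∣ X ^ n - 1) {m : ℕ}
    (hm : ∀ P ∈ s, m ≤ P.natDegree) (k : ℕ) :
    ∑ P ∈ s, (k - P.natDegree) ≤ ∑ d ∈ Ico m k, n.gcd (Fintype.card K ^ d - 1) / d * (k - d) := by
  rw [sum_comp (fun d ↦ k - d) natDegree]
  calc ∑ d ∈ s.image natDegree, #{P ∈ s | P.natDegree = d} • (k - d)
      ≤ ∑ d ∈ s.image natDegree, n.gcd (Fintype.card K ^ d - 1) / d * (k - d) := by
        refine sum_le_sum fun d hd ↦ ?_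
        obtain ⟨P, hP, rfl⟩ := mem_image.1 hd
        rw [smul_eq_mul]
        gcongr
        rw [Nat.le_div_iff_mul_le (hs P hP).1.natDegree_pos, mul_comm]
        exact natDegree_mul_card_filter_le hn hs _
    _ ≤ _ := by
        refine sum_le_sum_of_ne_zero fun d hd hne ↦ ?_
        obtain ⟨P, hP, rfl⟩ := mem_image.1 hd
        have hk : P.natDegree < k := by
          by_contra! h
          exact hne (by rw [Nat.sub_eq_zero_of_le h, mul_zero])
        exact mem_Ico.2 ⟨hm P hP, hk⟩

end FiniteField

theorem eval_geom_sum_X_zmod_two {n : ℕ} (hn : Odd n) (a : ZMod 2) :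
    (∑ i ∈ range n, X ^ i : (ZMod 2)[X]).eval a = 1 := by
  obtain rfl | rfl : a = 0 ∨ a = 1 := by revert a; decide
  · simp [hn.pos.ne']
  · simp [ZMod.natCast_eq_one_iff_odd.2 hn]

theorem two_le_natDegree_of_dvd_geom_sum {n : ℕ} (hn : Odd n) {P : (ZMod 2)[X]}
    (hP : Irreducible P) (hPT : P ∣ ∑ i ∈ range n, X ^ i) : 2 ≤ P.natDegree := by
  have hpos := hP.natDegree_pos
  by_contra! hlt
  obtain ⟨a, ha⟩ := exists_root_of_degree_eq_one (p := P) <| by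
    rw [degree_eq_natDegree hP.ne_zero]
    exact_mod_cast (by omega : P.natDegree = 1)
  have := eval_geom_sum_X_zmod_two hn a
  rw [eval_eq_zero_of_dvd_of_eval_eq_zero hPT ha] at this
  exact zero_ne_one this

def geomSumShortfall (n : ℕ) : ℕ := ∑ d ∈ Ico 2 6, n.gcd (2 ^ d - 1) / d * (6 - d)

theorem six_mul_card_normalizedFactors_geom_sum_le {n : ℕ} (hn : Odd n) :
    6 * #(normalizedFactors (∑ i ∈ range n, X ^ i : (ZMod 2)[X])).toFinset
      ≤ n - 1 + geomSumShortfall n := by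
  set T : (ZMod 2)[X] := ∑ i ∈ range n, X ^ i
  set s := (normalizedFactors T).toFinset
  have hT0 : T ≠ 0 := (monic_geom_sum_X hn.pos.ne').ne_zero
  have hTX : T ∣ X ^ n - 1 := ⟨X - 1, (geom_sum_mul X n).symm⟩
  have hs : ∀ P ∈ s, Irreducible P ∧ normalize P = P ∧ P ∣ T := fun P hP ↦
    (mem_normalizedFactors_iff' hT0).1 (Multiset.mem_toFinset.1 hP)
  have hs' : ∀ P ∈ s, Irreducible P ∧ P.Monic ∧ P ∣ X ^ n - 1 := fun P hP ↦
    ⟨(hs P hP).1, (normalize_eq_self_iff_monic (hs P hP).1.ne_zero).1 (hs P hP).2.1,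
      (hs P hP).2.2.trans hTX⟩
  have hdeg : ∑ P ∈ s, P.natDegree ≤ n - 1 := by
    rw [← natDegree_prod _ _ fun P hP ↦ (hs P hP).1.ne_zero]
    refine (natDegree_le_of_dvd (prod_dvd_of_irreducible_normalized_dvd hT0 hs) hT0).trans ?_
    exact natDegree_sum_le_of_forall_le _ _ fun i hi ↦ by
      simpa using Nat.le_sub_one_of_lt (mem_range.1 hi)
  have hshortfall : ∑ P ∈ s, (6 - P.natDegree) ≤ geomSumShortfall n := by
    simpa [geomSumShortfall] using sum_tsub_natDegree_le hn.pos.ne' hs'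
      (fun P hP ↦ two_le_natDegree_of_dvd_geom_sum hn (hs P hP).1 (hs P hP).2.2) 6
  have := s.mul_card_le_sum_add_sum_tsub natDegree 6
  omega

theorem Nat.Prime.dvd_pow_gcd_sub_one {p a n : ℕ} (hp : p.Prime) (hpa : Nat.Coprime a p)
    (h : p ∣ a ^ n - 1) : p ∣ a ^ n.gcd (p - 1) - 1 := by
  have hfermat : p ∣ a ^ (p - 1) - 1 := by
    simpa [Nat.totient_prime hp] using (Nat.ModEq.pow_totient hpa).symm.dvd'
  rw [← Nat.pow_sub_one_gcd_pow_sub_one]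
  exact Nat.dvd_gcd h hfermat

theorem mem_of_prime_dvd_two_pow_sub_one {p n : ℕ} (hp : p.Prime) (hn : Odd n)
    (hpn : p ∣ 2 ^ n - 1) (hp64 : p < 64) : p ∈ ({7, 23, 31, 47} : Finset ℕ) := by
  have hodd : Odd (2 ^ n - 1) :=
    Nat.Even.sub_odd Nat.one_le_two_pow (Nat.even_pow.2 ⟨even_two, hn.pos.ne'⟩) odd_one
  obtain ⟨d, hd_odd, hd_dvd, hpd⟩ : ∃ d, Odd d ∧ d ∣ p - 1 ∧ p ∣ 2 ^ d - 1 :=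
    ⟨_, hn.of_dvd_nat (Nat.gcd_dvd_left _ _), Nat.gcd_dvd_right _ _,
      hp.dvd_pow_gcd_sub_one (Nat.coprime_two_left.2 (hodd.of_dvd_nat hpn)) hpn⟩
  have hcheck : ∀ p < 64, 2 ≤ p → ∀ d ∈ (p - 1).divisors, Odd d → p ∣ 2 ^ d - 1 →
      p ∈ ({7, 23, 31, 47} : Finset ℕ) := by
    decide
  have hp2 := hp.two_le
  exact hcheck p hp64 hp2 d (Nat.mem_divisors.2 ⟨hd_dvd, by omega⟩) hd_odd hpd

theorem Nat.sum_log_primeFactors_le {b : ℕ} (hb : 1 < b) (m : ℕ) :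
    ∑ p ∈ m.primeFactors, Nat.log b p ≤ Nat.log b m := by
  rcases eq_or_ne m 0 with rfl | hm
  · simp
  refine Nat.le_log_of_pow_le hb ?_
  calc b ^ ∑ p ∈ m.primeFactors, Nat.log b p = ∏ p ∈ m.primeFactors, b ^ Nat.log b p :=
        (prod_pow_eq_pow_sum _ _ _).symm
    _ ≤ ∏ p ∈ m.primeFactors, p :=
        prod_le_prod' fun p hp ↦ Nat.pow_log_le_self b (Nat.prime_of_mem_primeFactors hp).ne_zero
    _ ≤ m := Nat.le_of_dvd (Nat.pos_of_ne_zero hm) (Nat.prod_primeFactors_dvd m)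

def mersenneShortfall (n : ℕ) : ℕ :=
  ∑ p ∈ ({7, 23, 31, 47} : Finset ℕ) with p ∣ 2 ^ n - 1, (6 - Nat.log 2 p)

theorem six_mul_card_primeFactors_two_pow_sub_one_le {n : ℕ} (hn : Odd n) :
    6 * #(2 ^ n - 1).primeFactors ≤ n - 1 + mersenneShortfall n := by
  have hlog : ∑ p ∈ (2 ^ n - 1).primeFactors, Nat.log 2 p ≤ n - 1 := by
    refine (Nat.sum_log_primeFactors_le one_lt_two _).trans ?_
    have h2n : 2 ≤ 2 ^ n := Nat.le_self_pow hn.pos.ne' 2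
    have : Nat.log 2 (2 ^ n - 1) < n := Nat.log_lt_of_lt_pow (by omega) (by omega)
    omega
  have hshortfall : ∑ p ∈ (2 ^ n - 1).primeFactors, (6 - Nat.log 2 p) ≤ mersenneShortfall n := by
    refine sum_le_sum_of_ne_zero fun p hp hne ↦ mem_filter.2 ⟨?_, Nat.dvd_of_mem_primeFactors hp⟩
    refine mem_of_prime_dvd_two_pow_sub_one (Nat.prime_of_mem_primeFactors hp) hn
      (Nat.dvd_of_mem_primeFactors hp) ?_
    simpa using Nat.lt_pow_of_log_lt (x := 6) one_lt_two (by omega : Nat.log 2 p < 6)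
  have := (2 ^ n - 1).primeFactors.mul_card_le_sum_add_sum_tsub (Nat.log 2) 6
  omega

theorem geomSumShortfall_add_mersenneShortfall_add_seven_le {n : ℕ} (hn : 9 < n) (hn15 : n ≠ 15)
    (hodd : Odd n) : geomSumShortfall n + mersenneShortfall n + 7 ≤ n := by
  rcases lt_or_ge n 38 with hlt | hge
  · have := Nat.odd_iff.1 hodd
    interval_cases n <;> first | omega | decide
  · have hgeom : geomSumShortfall n ≤ 22 :=
      calc geomSumShortfall n ≤ ∑ d ∈ Ico 2 6, (2 ^ d - 1) / d * (6 - d) := by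
            unfold geomSumShortfall
            gcongr with d hd
            exact Nat.gcd_le_right _ (Nat.sub_pos_of_lt (Nat.one_lt_two_pow (by simp at hd; omega)))
        _ = 22 := by decide
    have hmersenne : mersenneShortfall n ≤ 9 :=
      calc mersenneShortfall n ≤ ∑ p ∈ ({7, 23, 31, 47} : Finset ℕ), (6 - Nat.log 2 p) :=
            sum_le_sum_of_subset (filter_subset _ _)
        _ = 9 := by decide
    omega

/-- For odd `n > 9`, `n ≠ 15`, and `T = (x^n-1)/(x-1)` over `F_2`, the sieve inequality
`W(T) · W(2^n - 1) < 2^{n/2 - 1}` holds. -/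
theorem stmt_9 (n : ℕ) (hn : 9 < n) (hn15 : n ≠ 15) (hodd : Odd n)
    (T : Polynomial (ZMod 2)) (hT : T = ∑ i ∈ Finset.range n, X ^ i) :
    (({d : Polynomial (ZMod 2) | d.Monic ∧ Squarefree d ∧ d ∣ T}.ncard : ℝ)
        * ({d : ℕ | Squarefree d ∧ d ∣ 2 ^ n - 1}.ncard : ℝ))
      < (2 : ℝ) ^ ((n : ℝ) / 2 - 1) := by
  subst hT
  set r := #(normalizedFactors (∑ i ∈ range n, X ^ i : (ZMod 2)[X])).toFinset
  set w := #(2 ^ n - 1).primeFactors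
  have hWT : {d : (ZMod 2)[X] | d.Monic ∧ Squarefree d ∧ d ∣ ∑ i ∈ range n, X ^ i}.ncard
      ≤ 2 ^ r :=
    ncard_le_two_pow_card_toFinset_normalizedFactors (monic_geom_sum_X hodd.pos.ne').ne_zero
      fun d hd ↦ ⟨hd.2.1, hd.1.normalize_eq_self, hd.2.2⟩
  have hWm : {d : ℕ | Squarefree d ∧ d ∣ 2 ^ n - 1}.ncard ≤ 2 ^ w := by
    simpa [w, Nat.factors_eq] using ncard_le_two_pow_card_toFinset_normalizedFactors
      (Nat.sub_ne_zero_of_lt (Nat.one_lt_two_pow (by omega)))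
      (s := {d : ℕ | Squarefree d ∧ d ∣ 2 ^ n - 1}) fun d hd ↦ ⟨hd.1, normalize_eq d, hd.2⟩
  have hrw : 2 * (r + w) + 3 ≤ n := by
    have := six_mul_card_normalizedFactors_geom_sum_le hodd
    have := six_mul_card_primeFactors_two_pow_sub_one_le hodd
    have := geomSumShortfall_add_mersenneShortfall_add_seven_le hn hn15 hodd
    omega
  calc (_ : ℝ) ≤ (2 ^ r * 2 ^ w : ℕ) := by exact_mod_cast Nat.mul_le_mul hWT hWm
    _ = (2 : ℝ) ^ ((r + w : ℕ) : ℝ) := by rw [Real.rpow_natCast]; push_cast; ring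
    _ < 2 ^ ((n : ℝ) / 2 - 1) := by
      refine Real.rpow_lt_rpow_of_exponent_lt one_lt_two ?_
      have : (2 * (r + w) + 3 : ℝ) ≤ n := by exact_mod_cast hrw
      push_cast
      linarith
end

section
/- Let q be a prime power and n ≥ 2. An element α of F_{q^n} is normal over F_q (i.e., {α, α^q, ..., α^{q^{n-1}}} is an F_q-basis of F_{q^n}) if and only if the polynomials g_α(x) = Σ_{i=0}^{n-1} α^{q^i} x^{n-1-i} and x^n - 1 are relatively prime in F_{q^n}[x]. -/
/-!
Write `q = #F`, `n = [E : F]` and `g_α = ∑ α^{q^k} X^{n-1-k}`. Modulo `X^n - 1`, the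
product `(∑ dᵢ Xⁱ) * g_α` is `∑ₘ (∑ᵢ dᵢ α^{q^{i+m}}) X^{n-1-m}`, so `g_α` is coprime to
`X^n - 1` iff `d = 0` is the only solution in `Eⁿ` of the cyclic system
`∑ᵢ dᵢ α^{q^{i+m}} = 0` (`m < n`). If the conjugates of `α` form an `F`-basis, a solution `d`
makes the `F`-linear map `x ↦ ∑ᵢ dᵢ x^{q^i}` vanish on that basis, hence everywhere, and
Dedekind's independence of the distinct powers of the Frobenius forces `d = 0`. Conversely,
applying powers of the Frobenius to an `F`-linear relation `∑ cᵢ α^{q^i} = 0` turns `c` into a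
solution of the system.
-/

open Polynomial Finset

theorem Function.Periodic.sum_range_add {M : Type*} [AddCommMonoid M] {f : ℕ → M} {n : ℕ}
    (hf : Function.Periodic f n) (i : ℕ) :
    ∑ m ∈ range n, f (i + m) = ∑ m ∈ range n, f m := by
  induction i with
  | zero => simp
  | succ i ih =>
    rw [← ih]
    cases n with
    | zero => simp
    | succ n =>
      rw [sum_range_succ, sum_range_succ' (fun m => f (i + m)), add_right_comm i 1 n, add_assoc,
        hf i, add_zero]
      simp only [add_assoc, add_comm 1]

theorem pow_pred_pow_succ_of_pow_eq_one {M : Type*} [Monoid M] {r : M} {n k : ℕ}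
    (hr : r ^ n = 1) (hk : k < n) : (r ^ (n - 1)) ^ (k + 1) = r ^ (n - 1 - k) := by
  obtain ⟨m, rfl⟩ := Nat.exists_eq_add_of_lt hk
  have hexp : (k + m + 1 - 1) * (k + 1) = (k + m + 1 - 1 - k) + (k + m + 1) * k := by
    rw [show k + m + 1 - 1 - k = m by omega, show k + m + 1 - 1 = k + m by omega]
    ring
  rw [← pow_mul, hexp, pow_add, pow_mul, hr, one_pow, mul_one]

section CyclicProduct

variable {A : Type*} [CommSemiring A] {r : A} {n : ℕ}

theorem pow_mul_sum_mul_pow_pred_sub (hr : r ^ n = 1) {c : ℕ → A} (hc : Function.Periodic c n)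
    (i : ℕ) :
    r ^ i * ∑ k ∈ range n, c k * r ^ (n - 1 - k) =
      ∑ m ∈ range n, c (i + m) * r ^ (n - 1 - m) := by
  rcases Nat.eq_zero_or_pos n with rfl | hn
  · simp
  -- `s = r ^ (n - 1)` is an inverse of `r`, and `r ^ (n - 1 - k) = s ^ (k + 1)` is periodic in `k`.
  set s := r ^ (n - 1)
  have hrs : r * s = 1 := by rw [mul_pow_sub_one hn.ne', hr]
  have hs : s ^ n = 1 := by rw [← pow_mul, mul_comm, pow_mul, hr, one_pow]
  have hperiodic : Function.Periodic (fun k => c k * s ^ (k + 1)) n := fun k => by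
    simp only [hc k, add_right_comm k n 1, pow_add s _ n, hs, mul_one]
  calc r ^ i * ∑ k ∈ range n, c k * r ^ (n - 1 - k)
      = r ^ i * ∑ k ∈ range n, c k * s ^ (k + 1) := by
        congr 1
        exact sum_congr rfl fun k hk => by
          rw [pow_pred_pow_succ_of_pow_eq_one hr (mem_range.mp hk)]
    _ = r ^ i * ∑ m ∈ range n, c (i + m) * s ^ (i + m + 1) := by rw [hperiodic.sum_range_add]
    _ = ∑ m ∈ range n, c (i + m) * s ^ (m + 1) := by
        rw [mul_sum]
        refine sum_congr rfl fun m _ => ?_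
        calc r ^ i * (c (i + m) * s ^ (i + m + 1))
            = (r * s) ^ i * (c (i + m) * s ^ (m + 1)) := by ring
          _ = c (i + m) * s ^ (m + 1) := by rw [hrs, one_pow, one_mul]
    _ = ∑ m ∈ range n, c (i + m) * r ^ (n - 1 - m) :=
        sum_congr rfl fun m hm => by rw [pow_pred_pow_succ_of_pow_eq_one hr (mem_range.mp hm)]

theorem sum_mul_pow_mul_sum_mul_pow_pred_sub (hr : r ^ n = 1) {c : ℕ → A}
    (hc : Function.Periodic c n) (d : ℕ → A) :
    (∑ i ∈ range n, d i * r ^ i) * ∑ k ∈ range n, c k * r ^ (n - 1 - k) =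
      ∑ m ∈ range n, (∑ i ∈ range n, d i * c (i + m)) * r ^ (n - 1 - m) := by
  rw [Finset.sum_mul]
  simp_rw [mul_assoc, pow_mul_sum_mul_pow_pred_sub hr hc, Finset.mul_sum, Finset.sum_mul,
    mul_assoc]
  exact Finset.sum_comm

end CyclicProduct

namespace Polynomial

theorem sum_C_mul_X_pow_eq_zero_iff {R : Type*} [Semiring R] {n : ℕ} {a : ℕ → R} :
    ∑ i ∈ range n, C (a i) * X ^ i = 0 ↔ ∀ i < n, a i = 0 := by
  refine ⟨fun h i hi => ?_, fun h => sum_eq_zero fun i hi => ?_⟩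
  · simpa [finsetSum_coeff, coeff_C_mul_X_pow, hi] using congrArg (coeff · i) h
  · rw [h i (mem_range.mp hi), C_0, zero_mul]

theorem natDegree_sum_C_mul_X_pow_lt {R : Type*} [Semiring R] {n : ℕ} (hn : 0 < n) (a : ℕ → R) :
    (∑ i ∈ range n, C (a i) * X ^ i).natDegree < n :=
  (natDegree_sum_le_of_forall_le _ _ fun i hi =>
    (natDegree_C_mul_X_pow_le (a i) i).trans (Nat.le_pred_of_lt (mem_range.mp hi))).trans_lt
    (Nat.pred_lt hn.ne')

theorem natDegree_X_pow_sub_one {R : Type*} [Ring R] [Nontrivial R] {n : ℕ} :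
    (X ^ n - 1 : R[X]).natDegree = n := by
  rw [← C_1, natDegree_X_pow_sub_C]

section Domain

variable {R : Type*} [CommRing R] [IsDomain R] {n : ℕ}

theorem X_pow_sub_one_dvd_mul_iff (hn : 0 < n) {c : ℕ → R} (hc : Function.Periodic c n)
    (d : ℕ → R) :
    (X ^ n - 1 : R[X]) ∣
        (∑ i ∈ range n, C (d i) * X ^ i) * ∑ k ∈ range n, C (c k) * X ^ (n - 1 - k) ↔
      ∀ m < n, ∑ i ∈ range n, d i * c (i + m) = 0 := by
  set h : R[X] := X ^ n - 1
  set Φ : ℕ → R := fun m => ∑ i ∈ range n, d i * c (i + m)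
  have hroot : AdjoinRoot.root h ^ n = 1 := by
    rw [← sub_eq_zero, ← AdjoinRoot.mk_X, ← map_pow, ← map_one (AdjoinRoot.mk h), ← map_sub,
      AdjoinRoot.mk_self]
  have hmod : AdjoinRoot.mk h
        ((∑ i ∈ range n, C (d i) * X ^ i) * ∑ k ∈ range n, C (c k) * X ^ (n - 1 - k)) =
      AdjoinRoot.mk h (∑ m ∈ range n, C (Φ m) * X ^ (n - 1 - m)) := by
    simp only [map_mul, map_sum, map_pow, AdjoinRoot.mk_C, AdjoinRoot.mk_X, Φ]
    exact sum_mul_pow_mul_sum_mul_pow_pred_sub hroot (hc.comp _) _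
  have hreflect : ∑ m ∈ range n, C (Φ m) * X ^ (n - 1 - m) =
      ∑ j ∈ range n, C (Φ (n - 1 - j)) * X ^ j := by
    rw [← sum_range_reflect]
    refine sum_congr rfl fun j hj => ?_
    rw [Nat.sub_sub_self (by have := mem_range.mp hj; omega)]
  have hdeg : (∑ j ∈ range n, C (Φ (n - 1 - j)) * X ^ j).natDegree < h.natDegree := by
    rw [natDegree_X_pow_sub_one]
    exact natDegree_sum_C_mul_X_pow_lt hn _
  rw [← AdjoinRoot.mk_eq_zero, hmod, AdjoinRoot.mk_eq_zero, hreflect]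
  refine ⟨fun hdvd m hm => ?_, fun hΦ => ?_⟩
  · have := sum_C_mul_X_pow_eq_zero_iff.mp (eq_zero_of_dvd_of_natDegree_lt hdvd hdeg)
      (n - 1 - m) (by omega)
    rwa [Nat.sub_sub_self (by omega)] at this
  · rw [sum_C_mul_X_pow_eq_zero_iff.mpr fun j hj => hΦ _ (by omega)]
    exact dvd_zero h

end Domain

section Field

variable {K : Type*} [Field K]

theorem isCoprime_iff_forall_natDegree_lt_of_dvd_mul {g h : K[X]} (hh : h ≠ 0) :
    IsCoprime g h ↔ ∀ D : K[X], D.natDegree < h.natDegree → h ∣ D * g → D = 0 := by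
  refine ⟨fun hgh D hD hdvd =>
    eq_zero_of_dvd_of_natDegree_lt (hgh.symm.dvd_of_dvd_mul_right hdvd) hD, fun H => ?_⟩
  rw [← isRelPrime_iff_isCoprime]
  rintro d ⟨g', rfl⟩ ⟨k, rfl⟩
  by_contra hd
  have hd0 : d ≠ 0 := left_ne_zero_of_mul hh
  have hk0 : k ≠ 0 := right_ne_zero_of_mul hh
  have hdeg : d.natDegree ≠ 0 := fun h0 =>
    hd (isUnit_iff_degree_eq_zero.mpr (by rw [degree_eq_natDegree hd0, h0]; rfl))
  refine hk0 (H k ?_ ⟨g', by ring⟩)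
  rw [natDegree_mul hd0 hk0]
  omega

theorem isCoprime_X_pow_sub_one_iff_of_periodic {n : ℕ} (hn : 0 < n) {c : ℕ → K}
    (hc : Function.Periodic c n) :
    IsCoprime (∑ k ∈ range n, C (c k) * X ^ (n - 1 - k)) (X ^ n - 1 : K[X]) ↔
      ∀ d : ℕ → K, (∀ m < n, ∑ i ∈ range n, d i * c (i + m) = 0) → ∀ i < n, d i = 0 := by
  rw [isCoprime_iff_forall_natDegree_lt_of_dvd_mul (by rw [← C_1]; exact X_pow_sub_C_ne_zero hn 1),
    natDegree_X_pow_sub_one]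
  refine ⟨fun H d hd => ?_, fun H D hD hdvd => ?_⟩
  · refine sum_C_mul_X_pow_eq_zero_iff.mp (H _ (natDegree_sum_C_mul_X_pow_lt hn d) ?_)
    exact (X_pow_sub_one_dvd_mul_iff hn hc d).mpr hd
  · rw [as_sum_range_C_mul_X_pow' D hD] at hdvd ⊢
    exact sum_C_mul_X_pow_eq_zero_iff.mpr (H _ ((X_pow_sub_one_dvd_mul_iff hn hc _).mp hdvd))

end Field

end Polynomial

namespace FiniteField

theorem frobeniusAlgHom_pow_apply (F : Type*) {E : Type*} [Field F] [Fintype F] [CommRing E]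
    [Algebra F E] (k : ℕ) (x : E) :
    (frobeniusAlgHom F E ^ k) x = x ^ Fintype.card F ^ k := by
  rw [AlgHom.coe_pow, coe_frobeniusAlgHom, pow_iterate]

variable (F E : Type*) [Field F] [Fintype F] [Field E] [Fintype E] [Algebra F E]

theorem linearIndependent_frobeniusAlgHom_pow :
    LinearIndependent E fun i : Fin (Module.finrank F E) =>
      (frobeniusAlgHom F E ^ (i : ℕ)).toLinearMap :=
  (linearIndependent_algHom_toLinearMap F E E).comp _ (bijective_frobeniusAlgHom_pow F E).1

variable {F E}

theorem periodic_pow_card_pow (α : E) :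
    Function.Periodic (fun k => α ^ Fintype.card F ^ k) (Module.finrank F E) := fun k => by
  simp only [pow_add, pow_mul, ← Module.card_eq_pow_finrank, pow_card]

theorem exists_basis_eq_pow_card_pow_iff (α : E) :
    (∃ b : Module.Basis (Fin (Module.finrank F E)) F E,
        ∀ i, b i = α ^ Fintype.card F ^ (i : ℕ)) ↔
      ∀ d : ℕ → E, (∀ m < Module.finrank F E,
        ∑ i ∈ range (Module.finrank F E), d i * α ^ Fintype.card F ^ (i + m) = 0) →
        ∀ i < Module.finrank F E, d i = 0 := by
  have : NeZero (Module.finrank F E) := ⟨Module.finrank_pos.ne'⟩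
  have hfrob (j k : ℕ) : (frobeniusAlgHom F E ^ j) (α ^ Fintype.card F ^ k) =
      α ^ Fintype.card F ^ (k + j) := by
    rw [frobeniusAlgHom_pow_apply, ← pow_mul, ← pow_add]
  constructor
  · rintro ⟨b, hb⟩ d hd i hi
    have hvanish :
        ∑ j : Fin (Module.finrank F E), d j • (frobeniusAlgHom F E ^ (j : ℕ)).toLinearMap = 0 :=
      b.ext fun m => by
        simp only [LinearMap.sum_apply, LinearMap.smul_apply, AlgHom.toLinearMap_apply, hb, hfrob,
          smul_eq_mul, LinearMap.zero_apply, add_comm (m : ℕ)]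
        rw [← Finset.sum_range (fun j => d j * α ^ Fintype.card F ^ (j + m))]
        exact hd m m.2
    exact Fintype.linearIndependent_iff.mp (linearIndependent_frobeniusAlgHom_pow F E)
      (fun j => d j) hvanish ⟨i, hi⟩
  · intro H
    have hli : LinearIndependent F
        fun i : Fin (Module.finrank F E) => α ^ Fintype.card F ^ (i : ℕ) := by
      rw [Fintype.linearIndependent_iff]
      intro c hc i
      have hd := H (fun j => algebraMap F E (c (Fin.ofNat _ j))) (fun m _ => ?_) i i.2
      · simpa using hd
      have hcm := congrArg (frobeniusAlgHom F E ^ m) hc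
      simp only [map_sum, map_zero, Algebra.smul_def, map_mul, AlgHom.commutes, hfrob] at hcm
      rw [Finset.sum_range]
      simpa using hcm
    exact ⟨basisOfLinearIndependentOfCardEqFinrank hli (Fintype.card_fin _), fun i => by simp⟩

end FiniteField

theorem stmt_16_general (F E : Type*) [Field F] [Fintype F] [Field E] [Fintype E] [Algebra F E]
    (q n : ℕ) (hq : q = Fintype.card F) (hn : n = Module.finrank F E)
    (α : E) :
    (∃ b : Module.Basis (Fin n) F E, ∀ i : Fin n, b i = α ^ q ^ (i : ℕ)) ↔
      IsCoprime (∑ i ∈ Finset.range n, C (α ^ q ^ i) * X ^ (n - 1 - i))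
        ((X : Polynomial E) ^ n - 1) := by
  subst hq hn
  exact (FiniteField.exists_basis_eq_pow_card_pow_iff α).trans
    (isCoprime_X_pow_sub_one_iff_of_periodic Module.finrank_pos
      (FiniteField.periodic_pow_card_pow α)).symm

/-- An element `α` of `F_{q^n}` is normal over `F_q` iff
`g_α(x) = Σ_{i<n} α^{q^i} x^{n-1-i}` and `x^n - 1` are coprime in `F_{q^n}[x]`. -/
theorem stmt_16 (F E : Type*) [Field F] [Fintype F] [Field E] [Fintype E] [Algebra F E]
    (q n : ℕ) (hq : q = Fintype.card F) (hn : n = Module.finrank F E) (hn2 : 2 ≤ n)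
    (α : E) :
    (∃ b : Module.Basis (Fin n) F E, ∀ i : Fin n, b i = α ^ q ^ (i : ℕ)) ↔
      IsCoprime (∑ i ∈ Finset.range n, C (α ^ q ^ i) * X ^ (n - 1 - i))
        ((X : Polynomial E) ^ n - 1) :=
  stmt_16_general F E q n hq hn α
end
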